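/- For the reversed marked system S_1 = (w̄c, P_1), Post's equation holds: if u is derivable from w in S, then there exist rules γ_j X ↦ X δ_j in P_1 such that w̄c·δ_1 δ_2 ⋯ δ_k = γ_1 γ_2 ⋯ γ_k·ūc, where v̄ denotes the reversal of v. -/
import Mathlib


/-- The alphabet `{a, b, c}`: `a, b` are the letters of the normal system
and `c` is a new marker letter. -/
inductive Γ3 | a | b | c
deriving DecidableEq

/-- One derivation step of a normal system with rule set `P`:
`u → v` iff there is a rule `α X ↦ X β` in `P` (the pair `(α, β)`) and a
word `x` with `u = α x` and `v = x β`. -/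
def Step (P : List (List Γ3 × List Γ3)) (u v : List Γ3) : Prop :=
  ∃ p ∈ P, ∃ x : List Γ3, u = p.1 ++ x ∧ v = x ++ p.2

/-- Post's reversed marked rule set
`P₁ = {ᾱc X ↦ X cβ̄ : α X ↦ X β ∈ P} ∪ {y X ↦ X y : y ∈ {a, b, c}}`. -/
def P1 (P : List (List Γ3 × List Γ3)) : List (List Γ3 × List Γ3) :=
  P.map (fun p => (p.1.reverse ++ [Γ3.c], Γ3.c :: p.2.reverse)) ++
  [([Γ3.a], [Γ3.a]), ([Γ3.b], [Γ3.b]), ([Γ3.c], [Γ3.c])]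

lemma mem_P1_letter (P : List (List Γ3 × List Γ3)) (y : Γ3) :
    ([y], [y]) ∈ P1 P := by
  cases y <;> simp [P1]

lemma rotate_one (P : List (List Γ3 × List Γ3)) (y : Γ3) (z : List Γ3) :
    Step (P1 P) (y :: z) (z ++ [y]) :=
  ⟨([y], [y]), mem_P1_letter P y, z, rfl, rfl⟩

lemma rotate (P : List (List Γ3 × List Γ3)) (v₁ v₂ : List Γ3) :
    Relation.ReflTransGen (Step (P1 P)) (v₁ ++ v₂) (v₂ ++ v₁) := by
  induction v₁ generalizing v₂ with
  | nil => simpa using Relation.ReflTransGen.refl (r := Step (P1 P))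
  | cons y t ih =>
    refine Relation.ReflTransGen.head (rotate_one P y (t ++ v₂)) ?_
    have := ih (v₂ ++ [y])
    simpa [List.append_assoc] using this

lemma sim_step (P : List (List Γ3 × List Γ3)) {s t : List Γ3} (h : Step P s t) :
    Relation.ReflTransGen (Step (P1 P)) (s.reverse ++ [Γ3.c]) (t.reverse ++ [Γ3.c]) := by
  obtain ⟨p, hp, x, rfl, rfl⟩ := h
  have hmem : (p.1.reverse ++ [Γ3.c], Γ3.c :: p.2.reverse) ∈ P1 P := by
    simp only [P1, List.mem_append, List.mem_map]
    exact Or.inl ⟨p, hp, rfl⟩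
  have h1 : Relation.ReflTransGen (Step (P1 P))
      ((p.1 ++ x).reverse ++ [Γ3.c]) ((p.1.reverse ++ [Γ3.c]) ++ x.reverse) := by
    have := rotate P x.reverse (p.1.reverse ++ [Γ3.c])
    simpa [List.append_assoc] using this
  have h2 : Step (P1 P) ((p.1.reverse ++ [Γ3.c]) ++ x.reverse)
      (x.reverse ++ (Γ3.c :: p.2.reverse)) :=
    ⟨_, hmem, x.reverse, rfl, rfl⟩
  have h3 : Relation.ReflTransGen (Step (P1 P))
      (x.reverse ++ (Γ3.c :: p.2.reverse)) ((x ++ p.2).reverse ++ [Γ3.c]) := by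
    have := rotate P (x.reverse ++ [Γ3.c]) p.2.reverse
    simpa [List.append_assoc] using this
  exact h1.trans (Relation.ReflTransGen.head h2 h3)

lemma sim (P : List (List Γ3 × List Γ3)) {s t : List Γ3}
    (h : Relation.ReflTransGen (Step P) s t) :
    Relation.ReflTransGen (Step (P1 P)) (s.reverse ++ [Γ3.c]) (t.reverse ++ [Γ3.c]) := by
  induction h with
  | refl => exact Relation.ReflTransGen.refl
  | tail _ hst ih => exact ih.trans (sim_step P hst)

lemma equation_of_deriv {Q : List (List Γ3 × List Γ3)} {s t : List Γ3}
    (h : Relation.ReflTransGen (Step Q) s t) :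
    ∃ L : List (List Γ3 × List Γ3), (∀ p ∈ L, p ∈ Q) ∧
      s ++ (L.map Prod.snd).flatten = (L.map Prod.fst).flatten ++ t := by
  induction h using Relation.ReflTransGen.head_induction_on with
  | refl => exact ⟨[], by simp, by simp⟩
  | head hst _ ih =>
    obtain ⟨p, hp, x, rfl, rfl⟩ := hst
    obtain ⟨L, hL, heq⟩ := ih
    refine ⟨p :: L, ?_, ?_⟩
    · intro q hq
      rcases List.mem_cons.1 hq with rfl | hq
      · exact hp
      · exact hL q hq
    · simp only [List.map_cons, List.flatten_cons, List.append_assoc]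
      rw [← List.append_assoc x, heq]

lemma flatMap_getD {α : Type} (M : List α) (f : α → List Γ3) (d : α) :
    (List.range M.length).flatMap (fun j => f (M.getD j d)) = (M.map f).flatten := by
  induction M with
  | nil => simp
  | cons a tl ih =>
    rw [List.length_cons, List.range_succ_eq_map]
    simp only [List.flatMap_cons, List.flatMap_map, List.getD_cons_zero,
      List.getD_cons_succ, List.map_cons, List.flatten_cons]
    rw [ih]

theorem post_reversed_system_equation
    (P : List (List Γ3 × List Γ3)) (w u : List Γ3)
    (hP : ∀ p ∈ P, p.1 ≠ [] ∧ p.2 ≠ [] ∧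
      (∀ x ∈ p.1, x = Γ3.a ∨ x = Γ3.b) ∧ (∀ x ∈ p.2, x = Γ3.a ∨ x = Γ3.b))
    (hw : w ≠ [] ∧ ∀ x ∈ w, x = Γ3.a ∨ x = Γ3.b)
    (hu : u ≠ [] ∧ ∀ x ∈ u, x = Γ3.a ∨ x = Γ3.b)
    (h : Relation.ReflTransGen (Step P) w u) :
    ∃ k, ∃ γ δ : ℕ → List Γ3,
      (∀ j, j < k → (γ j, δ j) ∈ P1 P) ∧
      w.reverse ++ [Γ3.c] ++ (List.range k).flatMap δ =
        (List.range k).flatMap γ ++ u.reverse ++ [Γ3.c] := by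
  obtain ⟨L, hL, heq⟩ := equation_of_deriv (sim P h)
  refine ⟨L.length, fun j => (L.getD j ([], [])).1, fun j => (L.getD j ([], [])).2, ?_, ?_⟩
  · intro j hj
    have hmem : L.getD j ([], []) ∈ L := by
      rw [List.getD_eq_getElem L _ hj]
      exact List.getElem_mem hj
    exact hL _ hmem
  · rw [flatMap_getD L Prod.snd ([], []), flatMap_getD L Prod.fst ([], [])]
    rw [List.append_assoc] at heq ⊢
    rw [heq, List.append_assoc]
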